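/- Let L be a split regular Hom-Lie superalgebra. For any α ∈ Λ and any integers z_1, z_2 ∈ Z, the root α∘φ^{z_1} is connected to α∘φ^{z_2}; moreover if −α ∈ Λ, then α∘φ^{z_1} is also connected to −α∘φ^{z_2}. -/

import Mathlib

/-- The super sign `(-1)^{ij}` for `i j : ZMod 2`, valued in a field `K`. -/
def ssign (K : Type*) [Field K] (i j : ZMod 2) : K :=
  if i = 1 ∧ j = 1 then -1 else 1

/-- A split regular Hom-Lie superalgebra over a field `K`:
a `ZMod 2`-graded vector space `L` with a bilinear bracket and an even
automorphism `φ` satisfying skew-supersymmetry and the super Hom-Jacobi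
identity, together with a maximal abelian graded subalgebra `H`
(with respect to which `L` will be split). -/
structure SplitRegularHomLieSuperalgebra (K L : Type*) [Field K]
    [AddCommGroup L] [Module K L] where
  bracket : L →ₗ[K] L →ₗ[K] L
  φ : L ≃ₗ[K] L
  Lg : ZMod 2 → Submodule K L
  grading_sup : Lg 0 ⊔ Lg 1 = ⊤
  grading_disjoint : Lg 0 ⊓ Lg 1 = ⊥
  φ_even : ∀ i, Submodule.map (φ : L →ₗ[K] L) (Lg i) = Lg i
  φ_bracket : ∀ x y, φ (bracket x y) = bracket (φ x) (φ y)
  skew : ∀ (i j : ZMod 2), ∀ x ∈ Lg i, ∀ y ∈ Lg j,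
    bracket x y = -(ssign K i j) • bracket y x
  jacobi : ∀ (i j k : ZMod 2), ∀ x ∈ Lg i, ∀ y ∈ Lg j, ∀ z ∈ Lg k,
    ssign K i k • bracket (bracket x y) (φ z)
      + ssign K i j • bracket (bracket y z) (φ x)
      + ssign K j k • bracket (bracket z x) (φ y) = 0
  H : Submodule K L
  H_graded : H = (H ⊓ Lg 0) ⊔ (H ⊓ Lg 1)
  H_abelian : ∀ x ∈ H, ∀ y ∈ H, bracket x y = 0
  φ_H : Submodule.map (φ : L →ₗ[K] L) H = H
  H_max : ∀ A : Submodule K L, (A = (A ⊓ Lg 0) ⊔ (A ⊓ Lg 1)) →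
    (∀ x ∈ A, ∀ y ∈ A, bracket x y = 0) →
    Submodule.map (φ : L →ₗ[K] L) A = A → H ≤ A → A = H
  /-- the restriction of `φ` to `H₀ = H ⊓ L₀` as a linear automorphism -/
  φH0 : ↥(H ⊓ Lg 0) ≃ₗ[K] ↥(H ⊓ Lg 0)
  φH0_coe : ∀ h : ↥(H ⊓ Lg 0), (φH0 h : L) = φ (h : L)

namespace SplitRegularHomLieSuperalgebra

variable {K L : Type*} [Field K] [AddCommGroup L] [Module K L]
variable (D : SplitRegularHomLieSuperalgebra K L)

/-- The even part `H₀` of `H`. -/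
abbrev H0 : Submodule K L := D.H ⊓ D.Lg 0

/-- The root space associated to a linear functional `α : H₀ → K`. -/
def rootSpace (α : ↥D.H0 →ₗ[K] K) : Submodule K L where
  carrier := {v | ∀ h : ↥D.H0, D.bracket h v = α h • D.φ v}
  add_mem' := by
    intro a b ha hb h
    simp only [map_add, ha h, hb h, smul_add]
  zero_mem' := by
    intro h
    simp
  smul_mem' := by
    intro c x hx h
    simp only [map_smul, hx h, smul_comm c (α h)]

/-- The root system: the set of nonzero functionals with nonzero root space. -/
def Λ : Set (↥D.H0 →ₗ[K] K) := {α | α ≠ 0 ∧ D.rootSpace α ≠ ⊥}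

/-- The twist `α ∘ φ^z` of a functional by an integer power of `φ` (restricted
to `H₀`). -/
def twist (α : ↥D.H0 →ₗ[K] K) (z : ℤ) : ↥D.H0 →ₗ[K] K :=
  α.comp ((D.φH0 ^ z : ↥D.H0 ≃ₗ[K] ↥D.H0) : ↥D.H0 →ₗ[K] ↥D.H0)

/-- The subspace spanned by all brackets `[a,b]` with `a ∈ A`, `b ∈ B`. -/
def bracketSpan (A B : Submodule K L) : Submodule K L :=
  Submodule.span K {z | ∃ a ∈ A, ∃ b ∈ B, z = D.bracket a b}

/-- `±Λ = Λ ∪ (−Λ)`. -/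
def pmΛ : Set (↥D.H0 →ₗ[K] K) := {γ | γ ∈ D.Λ ∨ -γ ∈ D.Λ}

/-- The partial sums appearing in the definition of a connection:
`theta a 0 = a 0` and `theta a (i+1) = (theta a i + a (i+1)) ∘ φ⁻¹`. -/
def theta (a : ℕ → (↥D.H0 →ₗ[K] K)) : ℕ → (↥D.H0 →ₗ[K] K)
  | 0 => a 0
  | i + 1 => D.twist (theta a i + a (i + 1)) (-1)

/-- `α` is connected to `β`. -/
def Connected (α β : ↥D.H0 →ₗ[K] K) : Prop :=
  ∃ (k : ℕ) (a : ℕ → (↥D.H0 →ₗ[K] K)), 1 ≤ k ∧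
    (∀ i < k, a i ∈ D.pmΛ) ∧
    (∃ n : ℕ, a 0 = D.twist α (-(n : ℤ))) ∧
    (∀ i, 1 ≤ i → i + 1 ≤ k - 1 → D.theta a i ∈ D.pmΛ) ∧
    (∃ m : ℕ, D.theta a (k - 1) = D.twist β (-(m : ℤ)) ∨
              D.theta a (k - 1) = -(D.twist β (-(m : ℤ))))

/-- The connection class `[α]` of a root `α`. -/
def rootClass (α : ↥D.H0 →ₗ[K] K) : Set (↥D.H0 →ₗ[K] K) :=
  {β ∈ D.Λ | D.Connected α β}

/-- `H_{[α]} = span {[L_β, L_{−β}] : β ∈ [α]}`. -/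
def Hclass (α : ↥D.H0 →ₗ[K] K) : Submodule K L :=
  ⨆ β ∈ D.rootClass α, D.bracketSpan (D.rootSpace β) (D.rootSpace (-β))

/-- `V_{[α]} = ⊕_{β ∈ [α]} L_β`. -/
def Vclass (α : ↥D.H0 →ₗ[K] K) : Submodule K L :=
  ⨆ β ∈ D.rootClass α, D.rootSpace β

/-- `L_{[α]} = H_{[α]} ⊕ V_{[α]}`. -/
def Lclass (α : ↥D.H0 →ₗ[K] K) : Submodule K L :=
  D.Hclass α ⊔ D.Vclass α

/-- The center `Z(L) = {v : [v, L] = 0}`. -/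
def center : Submodule K L where
  carrier := {v | ∀ y : L, D.bracket v y = 0}
  add_mem' := by
    intro a b ha hb y
    simp only [map_add, LinearMap.add_apply, ha y, hb y, add_zero]
  zero_mem' := by
    intro y
    simp
  smul_mem' := by
    intro c x hx y
    simp only [map_smul, LinearMap.smul_apply, hx y, smul_zero]

/-- An ideal: a graded, `φ`-invariant subspace `I` with `[I,L] ⊆ I`. -/
def IsIdeal (I : Submodule K L) : Prop :=
  (I = (I ⊓ D.Lg 0) ⊔ (I ⊓ D.Lg 1)) ∧
  (∀ x ∈ I, ∀ y : L, D.bracket x y ∈ I) ∧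
  Submodule.map (D.φ : L →ₗ[K] L) I = I

/-- Simplicity: `[L,L] ≠ 0` and the only ideals are `0` and `L`. -/
def IsSimple : Prop :=
  (¬ ∀ x y : L, D.bracket x y = 0) ∧
  ∀ I : Submodule K L, D.IsIdeal I → I = ⊥ ∨ I = ⊤

end SplitRegularHomLieSuperalgebra

/-- The split condition: `L = H ⊕ (⊕_{α ∈ Λ} L_α)` as an internal direct sum. -/
structure IsSplitDecomposition {K L : Type*} [Field K] [AddCommGroup L]
    [Module K L] (D : SplitRegularHomLieSuperalgebra K L) : Prop where
  sup_eq_top : D.H ⊔ (⨆ α ∈ D.Λ, D.rootSpace α) = ⊤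
  disjoint_H : Disjoint D.H (⨆ α ∈ D.Λ, D.rootSpace α)
  disjoint_root : ∀ α ∈ D.Λ, Disjoint (D.rootSpace α)
    (D.H ⊔ ⨆ β ∈ {β ∈ D.Λ | β ≠ α}, D.rootSpace β)

/-! Since `φ` preserves the bracket, `φ` maps `L_α` into `L_{α∘φ⁻¹}` and `φ⁻¹` maps it into
`L_{α∘φ}`; hence every twist `α∘φ^z` of a root is again a root. Both `α∘φ^{z₁}` and `±α∘φ^{z₂}`
twist down to the root `α∘φ^{min z₁ z₂}`, which is therefore a one-element chain connecting them. -/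

namespace SplitRegularHomLieSuperalgebra

variable {K L : Type*} [Field K] [AddCommGroup L] [Module K L]
variable (D : SplitRegularHomLieSuperalgebra K L)

lemma twist_apply (α : ↥D.H0 →ₗ[K] K) (z : ℤ) (h : ↥D.H0) :
    D.twist α z h = α ((D.φH0 ^ z) h) := rfl

@[simp]
lemma twist_zero (α : ↥D.H0 →ₗ[K] K) : D.twist α 0 = α := rfl

lemma twist_twist (α : ↥D.H0 →ₗ[K] K) (z w : ℤ) :
    D.twist (D.twist α z) w = D.twist α (z + w) := by
  ext h
  simp only [twist_apply, zpow_add, LinearEquiv.mul_apply]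

@[simp]
lemma twist_neg (α : ↥D.H0 →ₗ[K] K) (z : ℤ) : D.twist (-α) z = -D.twist α z := rfl

lemma twist_ne_zero {α : ↥D.H0 →ₗ[K] K} (hα : α ≠ 0) (z : ℤ) : D.twist α z ≠ 0 := by
  intro h
  apply hα
  rw [← D.twist_zero α, ← add_neg_cancel z, ← D.twist_twist, h]
  rfl

lemma φ_symm_bracket (x y : L) :
    D.φ.symm (D.bracket x y) = D.bracket (D.φ.symm x) (D.φ.symm y) :=
  D.φ.symm_apply_eq.mpr (by rw [D.φ_bracket, D.φ.apply_symm_apply, D.φ.apply_symm_apply])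

lemma coe_φH0_symm (h : ↥D.H0) : (D.φH0.symm h : L) = D.φ.symm h :=
  D.φ.eq_symm_apply.mpr (by rw [← D.φH0_coe, D.φH0.apply_symm_apply])

lemma map_rootSpace_le_twist_neg_one (α : ↥D.H0 →ₗ[K] K) :
    (D.rootSpace α).map (D.φ : L →ₗ[K] L) ≤ D.rootSpace (D.twist α (-1)) := by
  rintro _ ⟨v, hv, rfl⟩ h
  have hv' := hv (D.φH0.symm h)
  calc D.bracket h (D.φ v)
      = D.φ (D.bracket (D.φ.symm h) v) := by rw [D.φ_bracket, D.φ.apply_symm_apply]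
    _ = D.twist α (-1) h • D.φ (D.φ v) := by
      rw [← D.coe_φH0_symm, hv', map_smul]
      rfl

lemma map_symm_rootSpace_le_twist_one (α : ↥D.H0 →ₗ[K] K) :
    (D.rootSpace α).map (D.φ.symm : L →ₗ[K] L) ≤ D.rootSpace (D.twist α 1) := by
  rintro _ ⟨v, hv, rfl⟩ h
  have hv' := hv (D.φH0 h)
  calc D.bracket h (D.φ.symm v)
      = D.φ.symm (D.bracket (D.φ h) v) := by rw [D.φ_symm_bracket, D.φ.symm_apply_apply]
    _ = D.twist α 1 h • D.φ (D.φ.symm v) := by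
      rw [← D.φH0_coe, hv', map_smul, D.φ.symm_apply_apply, D.φ.apply_symm_apply]
      rfl

lemma twist_mem_Λ_of_map_le {α : ↥D.H0 →ₗ[K] K} (hα : α ∈ D.Λ) (z : ℤ) (e : L ≃ₗ[K] L)
    (he : (D.rootSpace α).map (e : L →ₗ[K] L) ≤ D.rootSpace (D.twist α z)) :
    D.twist α z ∈ D.Λ :=
  ⟨D.twist_ne_zero hα.1 z, fun h => hα.2 (Submodule.map_eq_bot_iff.mp (eq_bot_iff.mpr (h ▸ he)))⟩

lemma twist_mem_Λ {α : ↥D.H0 →ₗ[K] K} (hα : α ∈ D.Λ) (z : ℤ) : D.twist α z ∈ D.Λ := by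
  induction z using Int.induction_on with
  | zero => exact hα
  | succ n ih =>
    rw [← D.twist_twist]
    exact D.twist_mem_Λ_of_map_le ih 1 D.φ.symm (D.map_symm_rootSpace_le_twist_one _)
  | pred n ih =>
    rw [sub_eq_add_neg, ← D.twist_twist]
    exact D.twist_mem_Λ_of_map_le ih (-1) D.φ (D.map_rootSpace_le_twist_neg_one _)

lemma connected_of_eq_twist {α β γ : ↥D.H0 →ₗ[K] K} (hγ : γ ∈ D.pmΛ) (n m : ℕ)
    (hα : γ = D.twist α (-n)) (hβ : γ = D.twist β (-m) ∨ γ = -D.twist β (-m)) :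
    D.Connected α β :=
  ⟨1, fun _ => γ, le_rfl, fun _ _ => hγ, ⟨n, hα⟩, fun _ _ _ => by omega, ⟨m, hβ⟩⟩

lemma twist_eq_twist_twist (α : ↥D.H0 →ₗ[K] K) {w z : ℤ} (hwz : w ≤ z) :
    D.twist α w = D.twist (D.twist α z) (-((z - w).toNat : ℤ)) := by
  rw [twist_twist]
  congr
  omega

lemma connected_twist {α β : ↥D.H0 →ₗ[K] K} (hα : α ∈ D.Λ) (z₁ z₂ : ℤ)
    (hβ : β = D.twist α z₂ ∨ β = -D.twist α z₂) : D.Connected (D.twist α z₁) β := by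
  refine D.connected_of_eq_twist (Or.inl (D.twist_mem_Λ hα (min z₁ z₂))) _
    ((z₂ - min z₁ z₂).toNat) (D.twist_eq_twist_twist α (min_le_left z₁ z₂)) ?_
  rw [D.twist_eq_twist_twist α (min_le_right z₁ z₂)]
  rcases hβ with rfl | rfl
  · exact Or.inl rfl
  · exact Or.inr (by rw [twist_neg, neg_neg])

end SplitRegularHomLieSuperalgebra

theorem stmt_8_general {K L : Type*} [Field K] [AddCommGroup L] [Module K L]
    (D : SplitRegularHomLieSuperalgebra K L)
    (α : ↥D.H0 →ₗ[K] K) (hα : α ∈ D.Λ) (z₁ z₂ : ℤ) :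
    D.Connected (D.twist α z₁) (D.twist α z₂) ∧
    (-α ∈ D.Λ → D.Connected (D.twist α z₁) (-(D.twist α z₂))) :=
  ⟨D.connected_twist hα z₁ z₂ (Or.inl rfl), fun _ => D.connected_twist hα z₁ z₂ (Or.inr rfl)⟩

/-- for `α ∈ Λ`, `α∘φ^{z₁}` is connected to `α∘φ^{z₂}`, and also to
`−α∘φ^{z₂}` whenever `−α ∈ Λ`. -/
theorem stmt_8 {K L : Type*} [Field K] [AddCommGroup L] [Module K L]
    (D : SplitRegularHomLieSuperalgebra K L) (hsplit : IsSplitDecomposition D)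
    (α : ↥D.H0 →ₗ[K] K) (hα : α ∈ D.Λ) (z₁ z₂ : ℤ) :
    D.Connected (D.twist α z₁) (D.twist α z₂) ∧
    (-α ∈ D.Λ → D.Connected (D.twist α z₁) (-(D.twist α z₂))) :=
  stmt_8_general D α hα z₁ z₂
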